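/- Let V ⊆ ℂ be a nonempty connected open set and let h₁, …, h_r be holomorphic functions on V that are algebraically independent over the field of rational functions, i.e. for every nonzero polynomial P ∈ ℂ[s, X₁, …, X_r] the function s ↦ P(s, h₁(s), …, h_r(s)) is not identically zero on V. Let Ω ⊆ ℂ^{1+r} be a connected open set containing the graph {(s, h₁(s), …, h_r(s)) : s ∈ V}, and let Q be a Nash function on Ω such that Q(s, h₁(s), …, h_r(s)) = 0 for all s ∈ V. Then Q is identically zero on Ω. -/

import Mathlib

/-- `f` is a Nash function at `z₀ ∈ D`: there is an open neighbourhood `U ⊆ D`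
of `z₀` and a nonzero polynomial `P` in `n+1` variables with `P(z, f z) = 0` on `U`. -/
def IsNashAt (n : ℕ) (D : Set (Fin n → ℂ)) (f : (Fin n → ℂ) → ℂ)
    (z₀ : Fin n → ℂ) : Prop :=
  ∃ U : Set (Fin n → ℂ), IsOpen U ∧ z₀ ∈ U ∧ U ⊆ D ∧
    ∃ P : MvPolynomial (Fin (n + 1)) ℂ, P ≠ 0 ∧
      ∀ z ∈ U, MvPolynomial.eval (Fin.snoc z (f z)) P = 0

/-- `f` is a Nash function on the open set `D`: it is holomorphic on `D` and a
Nash function at every point of `D`. -/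
def IsNashOn (n : ℕ) (D : Set (Fin n → ℂ)) (f : (Fin n → ℂ) → ℂ) : Prop :=
  DifferentiableOn ℂ f D ∧ ∀ z₀ ∈ D, IsNashAt n D f z₀

/-!
Near a point of the graph, `Q` satisfies `P(z, Q z) = 0`; dividing out the largest power of the
last variable writes this as `Q(z)^m * F(z) = 0`, where `F(z) = c(z)` wherever `Q(z) = 0`, for a
nonzero polynomial `c`. Algebraic independence of `s, h₁, …, h_r` means that `c` cannot vanish on
the graph over an open piece of `V`, so at some graph point `Q = 0` and `F ≠ 0`; hence `Q`
vanishes near that point. The identity theorem on the connected set `Ω`, proved in several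
variables by restricting to complex lines, finishes the proof.
-/

open MvPolynomial Filter Topology Set

section IdentityTheorem

variable {E F : Type*} [NormedAddCommGroup E] [NormedSpace ℂ E]
  [NormedAddCommGroup F] [NormedSpace ℂ F] [CompleteSpace F] {f : E → F} {U : Set E}

theorem DifferentiableOn.eqOn_zero_of_convex_of_eventuallyEq_zero
    (hf : DifferentiableOn ℂ f U) (hUo : IsOpen U) (hUc : Convex ℝ U) {z₀ : E} (h₀ : z₀ ∈ U)
    (hfz₀ : f =ᶠ[𝓝 z₀] 0) : EqOn f 0 U := by
  intro x hx
  set L : ℂ → E := fun t => z₀ + t • (x - z₀)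
  have hL : Differentiable ℂ L := (differentiable_id.smul_const _).const_add _
  have hL0 : L 0 = z₀ := by simp [L]
  have hL1 : L 1 = x := by simp [L]
  have hT : Convex ℝ (L ⁻¹' U) :=
    (hUc.translate_preimage_right z₀).linear_preimage
      ((LinearMap.toSpanSingleton ℂ E (x - z₀)).restrictScalars ℝ)
  have hline : EqOn (f ∘ L) 0 (L ⁻¹' U) := by
    refine ((hf.comp hL.differentiableOn fun _ ht => ht).analyticOnNhd
      (hUo.preimage hL.continuous)).eqOn_zero_of_preconnected_of_eventuallyEq_zero
      hT.isPreconnected (z₀ := 0) (show L 0 ∈ U by rwa [hL0]) ?_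
    exact hL.continuous.continuousAt.eventually (by rwa [hL0])
  simpa [hL1] using hline (show L 1 ∈ U by rwa [hL1])

theorem DifferentiableOn.eqOn_zero_of_preconnected_of_eventuallyEq_zero
    (hf : DifferentiableOn ℂ f U) (hUo : IsOpen U) (hU : IsPreconnected U) {z₀ : E}
    (h₀ : z₀ ∈ U) (hfz₀ : f =ᶠ[𝓝 z₀] 0) : EqOn f 0 U := by
  have hclosed : closure {p | f =ᶠ[𝓝 p] 0} ∩ U ⊆ {p | f =ᶠ[𝓝 p] 0} := by
    rintro p ⟨hp, hpU⟩
    obtain ⟨ε, hε, hball⟩ := Metric.isOpen_iff.1 hUo p hpU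
    obtain ⟨q, hq, hfq⟩ := mem_closure_iff.1 hp _ Metric.isOpen_ball (Metric.mem_ball_self hε)
    exact Filter.mem_of_superset (Metric.ball_mem_nhds p hε)
      ((hf.mono hball).eqOn_zero_of_convex_of_eventuallyEq_zero Metric.isOpen_ball
        (convex_ball p ε) hq hfq)
  intro z hz
  exact (hU.subset_of_closure_inter_subset isOpen_setOfPred_eventually_nhds ⟨z₀, h₀, hfz₀⟩
    hclosed hz).self_of_nhds

end IdentityTheorem

theorem exists_mem_eval_comp_ne_zero {𝕜 E σ : Type*} [NontriviallyNormedField 𝕜]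
    [NormedAddCommGroup E] [NormedSpace 𝕜 E] {γ : E → σ → 𝕜} {V : Set E}
    (hVc : IsPreconnected V) (hγ : ∀ i, AnalyticOnNhd 𝕜 (γ · i) V)
    (hindep : ∀ c : MvPolynomial σ 𝕜, c ≠ 0 → ∃ s ∈ V, eval (γ s) c ≠ 0)
    {W : Set E} (hWo : IsOpen W) (hWV : W ⊆ V) (hW : W.Nonempty)
    {c : MvPolynomial σ 𝕜} (hc : c ≠ 0) : ∃ s ∈ W, eval (γ s) c ≠ 0 := by
  by_contra! hzero
  obtain ⟨s₀, hs₀⟩ := hW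
  have hcγ : EqOn (fun s => eval (γ s) c) 0 V := by
    refine (AnalyticOnNhd.aeval_mvPolynomial hγ c).eqOn_zero_of_preconnected_of_eventuallyEq_zero
      hVc (hWV hs₀) ?_
    filter_upwards [hWo.mem_nhds hs₀] with s hs using hzero s hs
  obtain ⟨s, hsV, hs⟩ := hindep c hc
  exact hs (hcγ hsV)

theorem MvPolynomial.exists_eval_snoc_eq_pow_mul {R : Type*} [CommRing R] {n : ℕ}
    {P : MvPolynomial (Fin (n + 1)) R} (hP : P ≠ 0) :
    ∃ (m : ℕ) (q : Polynomial (MvPolynomial (Fin n) R)), q.coeff 0 ≠ 0 ∧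
      ∀ z a, eval (Fin.snoc z a) P = a ^ m * (q.map (eval z)).eval a := by
  have hp : finSuccEquiv R n (rename (finRotate (n + 1)) P) ≠ 0 := by
    simpa using (rename_injective _ (finRotate (n + 1)).injective).ne hP
  obtain ⟨q, hpq, hq⟩ := Polynomial.exists_eq_pow_rootMultiplicity_mul_and_not_dvd _ hp 0
  generalize Polynomial.rootMultiplicity (0 : MvPolynomial (Fin n) R) _ = m at hpq
  rw [map_zero, sub_zero] at hpq hq
  refine ⟨m, q, fun h0 => hq (Polynomial.X_dvd_iff.2 h0), fun z a => ?_⟩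
  rw [Fin.snoc_eq_cons_rotate, ← Function.comp_def, ← eval_rename, eval_eq_eval_mv_eval', hpq]
  simp

section TopologicalField

variable {𝕜 : Type*} [Field 𝕜] [TopologicalSpace 𝕜] [IsTopologicalRing 𝕜]

theorem Polynomial.continuousOn_eval_map_eval {X σ : Type*} [TopologicalSpace X]
    (q : Polynomial (MvPolynomial σ 𝕜)) {g : X → σ → 𝕜} {f : X → 𝕜} {U : Set X}
    (hg : ContinuousOn g U) (hf : ContinuousOn f U) :
    ContinuousOn (fun x => (q.map (MvPolynomial.eval (g x))).eval (f x)) U := by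
  simp only [Polynomial.eval_map, Polynomial.eval₂_eq_sum_range]
  exact continuousOn_finsetSum _ fun k _ =>
    ((continuous_eval _).comp_continuousOn hg).mul (hf.pow k)

theorem exists_eventuallyEq_zero_of_eval_snoc_eq_zero [T1Space 𝕜] {n : ℕ}
    {U T : Set (Fin n → 𝕜)} (hU : IsOpen U) {f : (Fin n → 𝕜) → 𝕜} (hf : ContinuousOn f U)
    {P : MvPolynomial (Fin (n + 1)) 𝕜} (hP : P ≠ 0)
    (hPf : ∀ z ∈ U, eval (Fin.snoc z (f z)) P = 0) (hTU : T ⊆ U) (hfT : ∀ z ∈ T, f z = 0)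
    (hT : ∀ c : MvPolynomial (Fin n) 𝕜, c ≠ 0 → ∃ z ∈ T, eval z c ≠ 0) :
    ∃ z ∈ U, f =ᶠ[𝓝 z] 0 := by
  obtain ⟨m, q, hq0, hPq⟩ := exists_eval_snoc_eq_pow_mul hP
  obtain ⟨z₁, hz₁T, hz₁⟩ := hT _ hq0
  have hF := q.continuousOn_eval_map_eval continuousOn_id hf
  have hFz₁ : (q.map (eval z₁)).eval (f z₁) ≠ 0 := by
    rwa [hfT z₁ hz₁T, ← Polynomial.coeff_zero_eq_eval_zero, Polynomial.coeff_map]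
  have hz₁U := hU.mem_nhds (hTU hz₁T)
  refine ⟨z₁, hTU hz₁T, ?_⟩
  filter_upwards [hz₁U, (hF.continuousAt hz₁U).eventually_ne hFz₁] with z hzU hFz
  have hmul : f z ^ m * (q.map (eval z)).eval (f z) = 0 := (hPq z (f z)).symm.trans (hPf z hzU)
  exact eq_zero_of_pow_eq_zero ((mul_eq_zero.1 hmul).resolve_right hFz)

end TopologicalField

/-- If `h₁, …, h_r` are holomorphic on a connected open `V ⊆ ℂ` and algebraically
independent over the rational functions, then a Nash function on a connected open
neighbourhood of the graph `{(s, h₁(s), …, h_r(s))}` vanishing on the graph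
vanishes identically. -/
theorem nash_vanishing_on_transcendental_graph (r : ℕ)
    (V : Set ℂ) (hVo : IsOpen V) (hVc : IsConnected V)
    (h : Fin r → ℂ → ℂ) (hhol : ∀ i, DifferentiableOn ℂ (h i) V)
    (hindep : ∀ P : MvPolynomial (Fin (r + 1)) ℂ, P ≠ 0 →
      ∃ s ∈ V, MvPolynomial.eval (Fin.cons s fun i => h i s) P ≠ 0)
    (Ω : Set (Fin (r + 1) → ℂ)) (hΩo : IsOpen Ω) (hΩc : IsConnected Ω)
    (hgraph : ∀ s ∈ V, (Fin.cons s fun i => h i s) ∈ Ω)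
    (Q : (Fin (r + 1) → ℂ) → ℂ) (hQ : IsNashOn (r + 1) Ω Q)
    (hvanish : ∀ s ∈ V, Q (Fin.cons s fun i => h i s) = 0) :
    ∀ p ∈ Ω, Q p = 0 := by
  set γ : ℂ → Fin (r + 1) → ℂ := fun s => Fin.cons s fun i => h i s
  have hγ : ∀ j, AnalyticOnNhd ℂ (γ · j) V :=
    Fin.cases (by simpa [γ] using analyticOnNhd_id) fun i => by
      simpa [γ] using (hhol i).analyticOnNhd hVo
  obtain ⟨s₀, hs₀⟩ := hVc.nonempty
  obtain ⟨U, hUo, hs₀U, hUΩ, P, hP, hPQ⟩ := hQ.2 _ (hgraph s₀ hs₀)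
  set W := V ∩ γ ⁻¹' U
  have hWo : IsOpen W :=
    (continuousOn_pi.2 fun j => (hγ j).continuousOn).isOpen_inter_preimage hVo hUo
  obtain ⟨z₁, hz₁U, hz₁⟩ := exists_eventuallyEq_zero_of_eval_snoc_eq_zero hUo
    (hQ.1.continuousOn.mono hUΩ) hP hPQ (image_subset_iff.2 inter_subset_right)
    (forall_mem_image.2 fun s hs => hvanish s hs.1) fun c hc => exists_mem_image.2 <|
      exists_mem_eval_comp_ne_zero hVc.isPreconnected hγ hindep hWo inter_subset_left
        ⟨s₀, hs₀, hs₀U⟩ hc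
  exact fun p hp => hQ.1.eqOn_zero_of_preconnected_of_eventuallyEq_zero hΩo
    hΩc.isPreconnected (hUΩ hz₁U) hz₁ hp
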